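/- If X and Y are disjoint sets with X equinumerous to Y, then there exists a total order on X ∪ Y such that X is strictly dense in Y: for any two elements a < b of Y there exists c ∈ X with a < c < b. -/

import Mathlib

/-!
Well-order `Y` and place every `x ∈ X` immediately after its partner `e x ∈ Y`, i.e. order
`X ∪ Y ≃ X ⊕ Y` by the lexicographic order on `Y × Bool`, with `y ↦ (y, false)` and
`x ↦ (e x, true)`. If `a < b` in `Y`, then `e⁻¹ a` sits strictly between them.
-/

section Interleave

variable {A B : Type*}

def interleave (e : A ≃ B) : A ⊕ B → Lex (B × Bool) :=
  Sum.elim (fun a => toLex (e a, true)) (fun b => toLex (b, false))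

theorem interleave_injective (e : A ≃ B) : Function.Injective (interleave e) := by
  rintro (a | b) (a' | b') h <;> simp_all [interleave]

variable [LinearOrder B] (e : A ≃ B)

theorem interleave_inr_lt_inr_iff {b b' : B} :
    interleave e (.inr b) < interleave e (.inr b') ↔ b < b' := by
  simp [interleave, Prod.Lex.toLex_lt_toLex]

theorem interleave_inr_lt_inl_symm (b : B) :
    interleave e (.inr b) < interleave e (.inl (e.symm b)) := by
  simp [interleave, Prod.Lex.toLex_lt_toLex]

theorem interleave_inl_symm_lt_inr {b b' : B} (h : b < b') :
    interleave e (.inl (e.symm b)) < interleave e (.inr b') := by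
  simp [interleave, Prod.Lex.toLex_lt_toLex, h]

end Interleave

theorem dense_order_of_equinumerous {α : Type*} (X Y : Set α) (hXY : Disjoint X Y)
    (h : Nonempty (X ≃ Y)) :
    ∃ s : ↥(X ∪ Y) → ↥(X ∪ Y) → Prop, IsLinearOrder ↥(X ∪ Y) s ∧
      ∀ a b : ↥(X ∪ Y), (a : α) ∈ Y → (b : α) ∈ Y → (s a b ∧ ¬ s b a) →
        ∃ c : ↥(X ∪ Y), (c : α) ∈ X ∧ (s a c ∧ ¬ s c a) ∧ (s c b ∧ ¬ s b c) := by
  classical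
  obtain ⟨e⟩ := h
  let _ : LinearOrder Y := IsWellOrder.linearOrder WellOrderingRel
  let u := Equiv.Set.union hXY
  let f := interleave e ∘ u
  let _ : LinearOrder ↥(X ∪ Y) := LinearOrder.lift' f ((interleave_injective e).comp u.injective)
  refine ⟨(· ≤ ·), inferInstance, fun a b ha hb hab => ?_⟩
  simp only [← lt_iff_le_not_ge] at hab ⊢
  change f a < f b at hab
  let x := e.symm ⟨a, ha⟩
  have hfa : f a = interleave e (.inr ⟨a, ha⟩) :=
    congrArg (interleave e) (Equiv.Set.union_apply_right hXY ha)
  have hfb : f b = interleave e (.inr ⟨b, hb⟩) :=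
    congrArg (interleave e) (Equiv.Set.union_apply_right hXY hb)
  have hfx : f ⟨x, .inl x.2⟩ = interleave e (.inl x) :=
    congrArg (interleave e) (Equiv.Set.union_apply_left hXY x.2)
  rw [hfa, hfb, interleave_inr_lt_inr_iff] at hab
  refine ⟨⟨x, .inl x.2⟩, x.2, ?_, ?_⟩
  · change f a < f _
    rw [hfa, hfx]
    exact interleave_inr_lt_inl_symm e _
  · change f _ < f b
    rw [hfx, hfb]
    exact interleave_inl_symm_lt_inr e hab
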